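/- Let V and W be Banach spaces over ℝ, let A : [0,1] → L(V,V) and B : [0,1] → L(W,W) be continuous maps into the Banach algebras of continuous linear endomorphisms, and let g : [0,1] → L(V,W) be differentiable on [0,1] (one-sidedly at the endpoints) such that g(t) is an invertible continuous linear map (a continuous linear equivalence V ≅ W) for every t ∈ [0,1]. Suppose A(t) = g(t)⁻¹ ∘ B(t) ∘ g(t) − g(t)⁻¹ ∘ g′(t) for all t ∈ [0,1]. Then Φ^A(t) = g(t)⁻¹ ∘ Φ^B(t) ∘ g(0) for all t ∈ [0,1], where Φ^A and Φ^B are the iterated-integral series formed in L(V,V) and L(W,W) respectively. (The transition-isomorphism compatibility of the paper's Lemma 4.2, specialized to a point base.) -/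

import Mathlib

/-!
`Φ^A` is the fundamental solution of the linear equation `Φ' = A Φ`, `Φ(0) = 1`: the series is
dominated by `‖1‖ (C t)ⁿ / n!`, so it may be integrated termwise, and `I_{n+1} = ∫ A Iₙ`. The
gauge relation says exactly that `G = g Φ^A` solves `G' = B G` with `G(0) = g(0)`; so does
`Φ^B g(0)`, and uniqueness for linear equations (Gronwall) gives `g Φ^A = Φ^B g(0)`.
-/

open MeasureTheory Set

variable {𝔸 : Type*} [NormedRing 𝔸] [NormedAlgebra ℝ 𝔸] [CompleteSpace 𝔸]

/-- Nested Chen iterated integral with accumulated product `x`: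
`chenAux A n x t = ∫₀ᵗ ∫₀^{s₁} ⋯ ∫₀^{sₙ₋₁} x * A s₁ * ⋯ * A sₙ dsₙ ⋯ ds₁`. -/
noncomputable def chenAux (A : ℝ → 𝔸) : ℕ → 𝔸 → ℝ → 𝔸
  | 0, x, _ => x
  | n + 1, x, t => ∫ s in (0:ℝ)..t, chenAux A n (x * A s) s

/-- The `n`-th Chen iterated integral
`Iₙ^A(t) = ∫₀ᵗ ∫₀^{s₁} ⋯ ∫₀^{sₙ₋₁} A(s₁) * A(s₂) * ⋯ * A(sₙ) dsₙ ⋯ ds₁`. -/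
noncomputable def chenI (A : ℝ → 𝔸) (n : ℕ) (t : ℝ) : 𝔸 :=
  chenAux A n 1 t

/-- The iterated-integral series (time-ordered exponential) `Φ^A(t) = ∑ₙ Iₙ^A(t)`. -/
noncomputable def chenPhi (A : ℝ → 𝔸) (t : ℝ) : 𝔸 :=
  ∑' n, chenI A n t

open Filter intervalIntegral
open scoped Nat Interval

theorem ContinuousOn.hasDerivWithinAt_integral_Icc {E : Type*} [NormedAddCommGroup E]
    [NormedSpace ℝ E] [CompleteSpace E] {f : ℝ → E} {a b t : ℝ} (hf : ContinuousOn f (Icc a b))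
    (ht : t ∈ Icc a b) :
    HasDerivWithinAt (fun u => ∫ s in a..u, f s) (f t) (Icc a b) t := by
  have : Fact (t ∈ Icc a b) := ⟨ht⟩
  exact integral_hasDerivWithinAt_right
    ((hf.mono (uIcc_subset_Icc (left_mem_Icc.2 (ht.1.trans ht.2)) ht)).intervalIntegrable)
    (hf.stronglyMeasurableAtFilter_nhdsWithin measurableSet_Icc t) (hf t ht)

section ChenSeries

variable {A : ℝ → 𝔸} {T : ℝ}

theorem chenAux_succ_eq_mul_integral (hA : ContinuousOn A (Icc 0 T)) {n : ℕ}
    (hcont : ContinuousOn (chenI A n) (Icc 0 T))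
    (hmul : ∀ x, ∀ s ∈ Icc 0 T, chenAux A n x s = x * chenI A n s) (x : 𝔸) {t : ℝ}
    (ht : t ∈ Icc 0 T) :
    chenAux A (n + 1) x t = x * ∫ s in 0..t, A s * chenI A n s := by
  have hsub : uIcc 0 t ⊆ Icc 0 T := uIcc_subset_Icc (left_mem_Icc.2 (ht.1.trans ht.2)) ht
  calc chenAux A (n + 1) x t = ∫ s in 0..t, x * (A s * chenI A n s) :=
        integral_congr fun s hs => by rw [hmul _ s (hsub hs), mul_assoc]
    _ = x * ∫ s in 0..t, A s * chenI A n s :=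
        (ContinuousLinearMap.mul ℝ 𝔸 x).intervalIntegral_comp_comm
          ((hA.mul hcont).mono hsub).intervalIntegrable

theorem continuousOn_chenI_and_chenAux_eq_mul (hA : ContinuousOn A (Icc 0 T)) (n : ℕ) :
    ContinuousOn (chenI A n) (Icc 0 T) ∧
      ∀ x, ∀ t ∈ Icc 0 T, chenAux A n x t = x * chenI A n t := by
  induction n with
  | zero => exact ⟨continuousOn_const, fun x _ _ => (mul_one x).symm⟩
  | succ n ih =>
    have hrec := chenAux_succ_eq_mul_integral hA ih.1 ih.2
    have hI : EqOn (chenI A (n + 1)) (fun t => ∫ s in 0..t, A s * chenI A n s) (Icc 0 T) :=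
      fun t ht => (hrec 1 ht).trans (one_mul _)
    refine ⟨fun t ht => ?_, fun x t ht => by rw [hrec x ht, hI ht]⟩
    exact (((hA.mul ih.1).hasDerivWithinAt_integral_Icc ht).continuousWithinAt).congr hI (hI ht)

theorem continuousOn_chenI (hA : ContinuousOn A (Icc 0 T)) (n : ℕ) :
    ContinuousOn (chenI A n) (Icc 0 T) :=
  (continuousOn_chenI_and_chenAux_eq_mul hA n).1

theorem chenI_succ (hA : ContinuousOn A (Icc 0 T)) (n : ℕ) {t : ℝ} (ht : t ∈ Icc 0 T) :
    chenI A (n + 1) t = ∫ s in 0..t, A s * chenI A n s :=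
  (chenAux_succ_eq_mul_integral hA (continuousOn_chenI hA n)
    (continuousOn_chenI_and_chenAux_eq_mul hA n).2 1 ht).trans (one_mul _)

theorem norm_chenI_le (hA : ContinuousOn A (Icc 0 T)) {C : ℝ}
    (hC : ∀ s ∈ Icc 0 T, ‖A s‖ ≤ C) (n : ℕ) {t : ℝ} (ht : t ∈ Icc 0 T) :
    ‖chenI A n t‖ ≤ ‖(1 : 𝔸)‖ * (C * t) ^ n / n ! := by
  induction n generalizing t with
  | zero => simp [chenI, chenAux]
  | succ n ih =>
    have hsub : Ioc 0 t ⊆ Icc 0 T := Ioc_subset_Icc_self.trans (Icc_subset_Icc_right ht.2)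
    calc ‖chenI A (n + 1) t‖ = ‖∫ s in 0..t, A s * chenI A n s‖ := by rw [chenI_succ hA n ht]
      _ ≤ ∫ s in 0..t, C * (‖(1 : 𝔸)‖ * (C * s) ^ n / n !) :=
          norm_integral_le_of_norm_le ht.1 (ae_of_all _ fun s hs =>
            norm_mul_le_of_le (hC s (hsub hs)) (ih (hsub hs)))
            (Continuous.intervalIntegrable (by fun_prop) _ _)
      _ = (‖(1 : 𝔸)‖ * C ^ (n + 1) / n !) * ∫ s in 0..t, s ^ n := by
          rw [← intervalIntegral.integral_const_mul]
          congr 1 with s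
          ring
      _ = ‖(1 : 𝔸)‖ * (C * t) ^ (n + 1) / (n + 1) ! := by
          rw [integral_pow, Nat.factorial_succ]
          push_cast
          field_simp
          ring

theorem exists_summable_bound_norm_chenI (hA : ContinuousOn A (Icc 0 T)) :
    ∃ u : ℕ → ℝ, Summable u ∧ ∀ n, ∀ t ∈ Icc 0 T, ‖chenI A n t‖ ≤ u n := by
  obtain ⟨C, hC⟩ := isCompact_Icc.exists_bound_of_continuousOn hA
  refine ⟨fun n => ‖(1 : 𝔸)‖ * (C * T) ^ n / n !, ?_, fun n t ht => ?_⟩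
  · simpa only [mul_div_assoc] using (Real.summable_pow_div_factorial (C * T)).mul_left ‖(1 : 𝔸)‖
  · have hC0 : 0 ≤ C := (norm_nonneg _).trans (hC 0 (left_mem_Icc.2 (ht.1.trans ht.2)))
    refine (norm_chenI_le hA hC n ht).trans ?_
    dsimp only
    gcongr
    · exact mul_nonneg hC0 ht.1
    · exact ht.2

theorem summable_chenI (hA : ContinuousOn A (Icc 0 T)) {t : ℝ} (ht : t ∈ Icc 0 T) :
    Summable fun n => chenI A n t :=
  have ⟨_, hu, hbound⟩ := exists_summable_bound_norm_chenI hA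
  .of_norm_bounded hu fun n => hbound n t ht

theorem continuousOn_chenPhi (hA : ContinuousOn A (Icc 0 T)) :
    ContinuousOn (chenPhi A) (Icc 0 T) :=
  have ⟨_, hu, hbound⟩ := exists_summable_bound_norm_chenI hA
  continuousOn_tsum (continuousOn_chenI hA) hu hbound

omit [CompleteSpace 𝔸] in
theorem chenPhi_zero (A : ℝ → 𝔸) : chenPhi A 0 = 1 := by
  have h : ∀ n ≠ 0, chenI A n 0 = 0 := by
    rintro (_ | n) hn
    · exact absurd rfl hn
    · exact integral_same
  rw [chenPhi, tsum_eq_single 0 h]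
  rfl

theorem chenPhi_eq_one_add_integral (hA : ContinuousOn A (Icc 0 T)) {t : ℝ}
    (ht : t ∈ Icc 0 T) :
    chenPhi A t = 1 + ∫ s in 0..t, A s * chenPhi A s := by
  obtain ⟨u, hu, hbound⟩ := exists_summable_bound_norm_chenI hA
  have hsub : uIcc 0 t ⊆ Icc 0 T := uIcc_subset_Icc (left_mem_Icc.2 (ht.1.trans ht.2)) ht
  have hsub' : Ι 0 t ⊆ Icc 0 T := uIoc_subset_uIcc.trans hsub
  have hsum : HasSum (fun n => ∫ s in 0..t, A s * chenI A n s)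
      (∫ s in 0..t, A s * chenPhi A s) :=
    hasSum_integral_of_dominated_convergence (fun n s => ‖A s‖ * u n)
      (fun n => ((hA.mul (continuousOn_chenI hA n)).mono hsub').aestronglyMeasurable
        measurableSet_uIoc)
      (fun n => ae_of_all _ fun s hs => norm_mul_le_of_le le_rfl (hbound n s (hsub' hs)))
      (ae_of_all _ fun s _ => hu.mul_left _)
      (by simpa only [tsum_mul_left] using
        ((hA.norm.mono hsub).intervalIntegrable.mul_const _))
      (ae_of_all _ fun s hs => (summable_chenI hA (hsub' hs)).hasSum.mul_left (A s))
  have hsucc : HasSum (fun n => chenI A (n + 1) t) (∫ s in 0..t, A s * chenPhi A s) := by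
    simpa only [chenI_succ hA _ ht] using hsum
  rw [chenPhi, (summable_chenI hA ht).tsum_eq_zero_add, hsucc.tsum_eq]
  rfl

theorem hasDerivWithinAt_chenPhi (hA : ContinuousOn A (Icc 0 T)) {t : ℝ} (ht : t ∈ Icc 0 T) :
    HasDerivWithinAt (chenPhi A) (A t * chenPhi A t) (Icc 0 T) t :=
  (((hA.mul (continuousOn_chenPhi hA)).hasDerivWithinAt_integral_Icc ht).const_add 1).congr
    (fun _ hs => chenPhi_eq_one_add_integral hA hs) (chenPhi_eq_one_add_integral hA ht)

end ChenSeries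

section Gauge

open ContinuousLinearMap

variable {V W : Type*} [NormedAddCommGroup V] [NormedSpace ℝ V]
  [NormedAddCommGroup W] [NormedSpace ℝ W]

theorem eqOn_chenPhi_comp_of_hasDerivWithinAt [CompleteSpace W] {B : ℝ → W →L[ℝ] W} {T : ℝ}
    (hB : ContinuousOn B (Icc 0 T)) {G : ℝ → V →L[ℝ] W}
    (hG : ∀ t ∈ Icc 0 T, HasDerivWithinAt G ((B t).comp (G t)) (Icc 0 T) t) :
    EqOn G (fun t => (chenPhi B t).comp (G 0)) (Icc 0 T) := by
  obtain ⟨C, hC⟩ := isCompact_Icc.exists_bound_of_continuousOn hB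
  have hlip (t : ℝ) (ht : t ∈ Ico 0 T) :
      LipschitzOnWith C.toNNReal (fun X : V →L[ℝ] W => (B t).comp X) univ := by
    refine (LipschitzWith.of_dist_le_mul fun X Y => ?_).lipschitzOnWith
    rw [dist_eq_norm, dist_eq_norm, ← comp_sub]
    exact (opNorm_comp_le _ _).trans (mul_le_mul_of_nonneg_right
      ((hC t (Ico_subset_Icc_self ht)).trans (Real.le_coe_toNNReal C)) (norm_nonneg _))
  have hΦ (t : ℝ) (ht : t ∈ Icc 0 T) : HasDerivWithinAt (fun t => (chenPhi B t).comp (G 0))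
      ((B t).comp ((chenPhi B t).comp (G 0))) (Icc 0 T) t :=
    ((hasDerivWithinAt_chenPhi hB ht).clm_comp (hasDerivWithinAt_const t _ (G 0))).congr_deriv
      (by simp [mul_def, comp_assoc])
  have hIci {F : ℝ → V →L[ℝ] W}
      (hF : ∀ t ∈ Icc 0 T, HasDerivWithinAt F ((B t).comp (F t)) (Icc 0 T) t) (t : ℝ)
      (ht : t ∈ Ico 0 T) : HasDerivWithinAt F ((B t).comp (F t)) (Ici t) t :=
    (hF t (Ico_subset_Icc_self ht)).mono_of_mem_nhdsWithin
      (mem_of_superset (Icc_mem_nhdsGE ht.2) (Icc_subset_Icc_left ht.1))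
  exact ODE_solution_unique_of_mem_Icc_right hlip
    (fun t ht => (hG t ht).continuousWithinAt) (hIci hG) (fun _ _ => mem_univ _)
    (fun t ht => (hΦ t ht).continuousWithinAt) (hIci hΦ) (fun _ _ => mem_univ _)
    (by simp [chenPhi_zero, one_def])

theorem hasDerivWithinAt_comp_of_gauge {A : V →L[ℝ] V} {B : W →L[ℝ] W} {g : ℝ → V →L[ℝ] W}
    {g' : V →L[ℝ] W} {ginv : W →L[ℝ] V} {F : ℝ → V →L[ℝ] V} {s : Set ℝ} {t : ℝ}
    (hg : HasDerivWithinAt g g' s t) (hF : HasDerivWithinAt F (A.comp (F t)) s t)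
    (hright : (g t).comp ginv = ContinuousLinearMap.id ℝ W)
    (hgauge : A = ginv.comp (B.comp (g t)) - ginv.comp g') :
    HasDerivWithinAt (fun u => (g u).comp (F u)) (B.comp ((g t).comp (F t))) s t := by
  have hgA : (g t).comp A = B.comp (g t) - g' := by
    simp only [hgauge, comp_sub, ← comp_assoc, hright, id_comp]
  refine (hg.clm_comp hF).congr_deriv ?_
  rw [← comp_assoc, hgA, sub_comp, comp_assoc]
  abel

end Gauge

/-- gauge invariance for operator-valued iterated integrals
(Lemma 4.2 at a point base): if `g` is a differentiable path of invertible continuous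
linear maps `V ≃ W` with inverse path `ginv`, intertwining `A` and `B` via the gauge
relation `A = g⁻¹ ∘ B ∘ g − g⁻¹ ∘ g'`, then `Φ^A(t) = g(t)⁻¹ ∘ Φ^B(t) ∘ g(0)`. -/
theorem chenPhi_transition_isomorphism
    {V W : Type*} [NormedAddCommGroup V] [NormedSpace ℝ V] [CompleteSpace V]
    [NormedAddCommGroup W] [NormedSpace ℝ W] [CompleteSpace W]
    (A : ℝ → V →L[ℝ] V) (B : ℝ → W →L[ℝ] W)
    (hA : ContinuousOn A (Icc 0 1)) (hB : ContinuousOn B (Icc 0 1))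
    (g g' : ℝ → V →L[ℝ] W) (ginv : ℝ → W →L[ℝ] V)
    (hg : ∀ t ∈ Icc (0:ℝ) 1, HasDerivWithinAt g (g' t) (Icc 0 1) t)
    (hinv_left : ∀ t ∈ Icc (0:ℝ) 1, (ginv t).comp (g t) = ContinuousLinearMap.id ℝ V)
    (hinv_right : ∀ t ∈ Icc (0:ℝ) 1, (g t).comp (ginv t) = ContinuousLinearMap.id ℝ W)
    (hgauge : ∀ t ∈ Icc (0:ℝ) 1,
      A t = (ginv t).comp ((B t).comp (g t)) - (ginv t).comp (g' t)) :
    ∀ t ∈ Icc (0:ℝ) 1,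
      chenPhi A t = (ginv t).comp ((chenPhi B t).comp (g 0)) := by
  intro t ht
  have hG := eqOn_chenPhi_comp_of_hasDerivWithinAt hB fun s hs =>
    hasDerivWithinAt_comp_of_gauge (hg s hs) (hasDerivWithinAt_chenPhi hA hs) (hinv_right s hs)
      (hgauge s hs)
  have hGt : (g t).comp (chenPhi A t) = (chenPhi B t).comp (g 0) := by
    simpa [chenPhi_zero, ContinuousLinearMap.one_def] using hG ht
  rw [← hGt, ← ContinuousLinearMap.comp_assoc, hinv_left t ht, ContinuousLinearMap.id_comp]
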